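/- Let A ∈ ℝ and let y₁, y₂, x₁, x₂ : ℝ → ℝ be differentiable functions satisfying the Hénon-Heiles equations with ε = 16 and B = 16A: y₁' = x₁, y₂' = x₂, x₁' = −A y₁ − 2 y₁ y₂, x₂' = −16A y₂ − y₁² − 16 y₂². Then the function t ↦ H₂(y₁(t), y₂(t), x₁(t), x₂(t)), where H₂ = 3x₁⁴ + 6A x₁² y₁² + 12 x₁² y₁² y₂ − 4 x₁ x₂ y₁³ − 4A y₁⁴ y₂ − 4 y₁⁴ y₂² + 3A² y₁⁴ − (2/3) y₁⁶, is constant (its derivative vanishes identically). -/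

import Mathlib

/-! By the chain rule, the derivative of `H₂` along a trajectory is the derivative of the
polynomial `H₂` in the direction of the velocity. Along the general Hénon–Heiles vector field
this directional derivative is `4 x₁ y₁³ ((B - 16A) y₂ + (ε - 16) y₂²)`, which vanishes
identically when `ε = 16` and `B = 16A`. -/

namespace HenonHeiles

noncomputable def H₂ (A y₁ y₂ x₁ x₂ : ℝ) : ℝ :=
  3 * x₁^4 + 6 * A * x₁^2 * y₁^2 + 12 * x₁^2 * y₁^2 * y₂ - 4 * x₁ * x₂ * y₁^3
    - 4 * A * y₁^4 * y₂ - 4 * y₁^4 * y₂^2 + 3 * A^2 * y₁^4 - (2/3) * y₁^6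

/-- The derivative of `H₂` at `(y₁, y₂, x₁, x₂)` in the direction `(v₁, v₂, w₁, w₂)`. -/
def dH₂ (A y₁ y₂ x₁ x₂ v₁ v₂ w₁ w₂ : ℝ) : ℝ :=
  (12 * A * x₁^2 * y₁ + 24 * x₁^2 * y₁ * y₂ - 12 * x₁ * x₂ * y₁^2 - 16 * A * y₁^3 * y₂
      - 16 * y₁^3 * y₂^2 + 12 * A^2 * y₁^3 - 4 * y₁^5) * v₁
    + (12 * x₁^2 * y₁^2 - 4 * A * y₁^4 - 8 * y₁^4 * y₂) * v₂
    + (12 * x₁^3 + 12 * A * x₁ * y₁^2 + 24 * x₁ * y₁^2 * y₂ - 4 * x₂ * y₁^3) * w₁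
    - 4 * x₁ * y₁^3 * w₂

theorem hasDerivAt_H₂ (A : ℝ) {y₁ y₂ x₁ x₂ : ℝ → ℝ} {v₁ v₂ w₁ w₂ t : ℝ}
    (d₁ : HasDerivAt y₁ v₁ t) (d₂ : HasDerivAt y₂ v₂ t)
    (d₃ : HasDerivAt x₁ w₁ t) (d₄ : HasDerivAt x₂ w₂ t) :
    HasDerivAt (fun s => H₂ A (y₁ s) (y₂ s) (x₁ s) (x₂ s))
      (dH₂ A (y₁ t) (y₂ t) (x₁ t) (x₂ t) v₁ v₂ w₁ w₂) t := by
  have hchain := ((((((((d₃.pow 4).const_mul 3).add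
      (((d₃.pow 2).const_mul (6 * A)).mul (d₁.pow 2))).add
      ((((d₃.pow 2).const_mul 12).mul (d₁.pow 2)).mul d₂)).sub
      (((d₃.const_mul 4).mul d₄).mul (d₁.pow 3))).sub
      (((d₁.pow 4).const_mul (4 * A)).mul d₂)).sub
      (((d₁.pow 4).const_mul 4).mul (d₂.pow 2))).add
      ((d₁.pow 4).const_mul (3 * A^2))).sub
      ((d₁.pow 6).const_mul (2/3))
  refine hchain.congr_deriv ?_
  simp only [dH₂, Pi.mul_apply, Pi.pow_apply]
  push_cast
  ring

theorem dH₂_along_flow (A B ε y₁ y₂ x₁ x₂ : ℝ) :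
    dH₂ A y₁ y₂ x₁ x₂ x₁ x₂ (-A * y₁ - 2 * y₁ * y₂) (-B * y₂ - y₁^2 - ε * y₂^2)
      = 4 * x₁ * y₁^3 * ((B - 16 * A) * y₂ + (ε - 16) * y₂^2) := by
  unfold dH₂
  ring

end HenonHeiles

theorem henonHeiles_case_iii_H2_constant (A : ℝ) (y₁ y₂ x₁ x₂ : ℝ → ℝ)
    (hy₁ : Differentiable ℝ y₁) (hy₂ : Differentiable ℝ y₂)
    (hx₁ : Differentiable ℝ x₁) (hx₂ : Differentiable ℝ x₂)
    (h₁ : ∀ t, deriv y₁ t = x₁ t)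
    (h₂ : ∀ t, deriv y₂ t = x₂ t)
    (h₃ : ∀ t, deriv x₁ t = -A * y₁ t - 2 * y₁ t * y₂ t)
    (h₄ : ∀ t, deriv x₂ t = -(16 * A) * y₂ t - (y₁ t)^2 - 16 * (y₂ t)^2) :
    ∀ t, deriv (fun s =>
      3 * (x₁ s)^4 + 6 * A * (x₁ s)^2 * (y₁ s)^2 + 12 * (x₁ s)^2 * (y₁ s)^2 * (y₂ s)
        - 4 * (x₁ s) * (x₂ s) * (y₁ s)^3 - 4 * A * (y₁ s)^4 * (y₂ s)
        - 4 * (y₁ s)^4 * (y₂ s)^2 + 3 * A^2 * (y₁ s)^4 - (2/3) * (y₁ s)^6) t = 0 := by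
  intro t
  have hH := HenonHeiles.hasDerivAt_H₂ A
    (h₁ t ▸ (hy₁ t).hasDerivAt) (h₂ t ▸ (hy₂ t).hasDerivAt) (h₃ t ▸ (hx₁ t).hasDerivAt) (h₄ t ▸ (hx₂ t).hasDerivAt)
  rw [HenonHeiles.dH₂_along_flow] at hH
  exact hH.deriv.trans (by ring)
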